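/- arXiv:solv-int/9812010 — 2 statements merged into one kernel-verified Lean document; each statement's English description precedes it below -/
import Mathlib

section
/- Let f, b11, b12, b22 be smooth functions of (x,y) with sin f nowhere zero, satisfying the Gauss-Mainardi-Codazzi equations in Tchebycheff coordinates: f_{xy} = (b12^2 - b11 b22)/sin f, b11_y = b12_x + ((b22 - b12 cos f)/sin f) f_x, and b12_y = b22_x - ((b11 - b12 cos f)/sin f) f_y. Then the sl_2-valued matrices A = (i/2) [[f_x, (e^{if} b11 - b12)/sin f],[(e^{-if} b11 - b12)/sin f, -f_x]] and B = (i/2) [[0, (e^{if} b12 - b22)/sin f],[(e^{-if} b12 - b22)/sin f, 0]] satisfy the zero-curvature condition A_y - B_x + [A,B] = 0. -/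
open Matrix

noncomputable section

abbrev M2 := Matrix (Fin 2) (Fin 2) ℂ

/-- Partial derivative in `x` of a matrix-valued function, taken entrywise. -/
def pdx (A : ℝ → ℝ → M2) (x y : ℝ) : M2 :=
  Matrix.of fun i j => deriv (fun s => A s y i j) x

/-- Partial derivative in `y` of a matrix-valued function, taken entrywise. -/
def pdy (A : ℝ → ℝ → M2) (x y : ℝ) : M2 :=
  Matrix.of fun i j => deriv (fun s => A x s i j) y

/-- Smoothness of a matrix-valued function of `(x,y)`, entrywise. -/
def SmoothM (A : ℝ → ℝ → M2) : Prop :=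
  ∀ i j, ContDiff ℝ (⊤ : ℕ∞) (fun p : ℝ × ℝ => A p.1 p.2 i j)

/-- The curvature `A_y - B_x + [A,B]` of the pair `(A,B)`. -/
def curv (A B : ℝ → ℝ → M2) (x y : ℝ) : M2 :=
  pdy A x y - pdx B x y + (A x y * B x y - B x y * A x y)

/-- Partial derivative in `x` of a scalar function. -/
def px (u : ℝ → ℝ → ℝ) (x y : ℝ) : ℝ := deriv (fun s => u s y) x

/-- Partial derivative in `y` of a scalar function. -/
def py (u : ℝ → ℝ → ℝ) (x y : ℝ) : ℝ := deriv (fun s => u x s) y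

/-- Smoothness of a scalar function of `(x,y)`. -/
def Smooth2 (u : ℝ → ℝ → ℝ) : Prop := ContDiff ℝ (⊤ : ℕ∞) (fun p : ℝ × ℝ => u p.1 p.2)

/-- The Gauss–Mainardi–Codazzi equations in Tchebycheff coordinates. -/
def GMCT (f b11 b12 b22 : ℝ → ℝ → ℝ) : Prop :=
  ∀ x y : ℝ,
    py (px f) x y = (b12 x y ^ 2 - b11 x y * b22 x y) / Real.sin (f x y) ∧
    py b11 x y = px b12 x y +
      ((b22 x y - b12 x y * Real.cos (f x y)) / Real.sin (f x y)) * px f x y ∧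
    py b12 x y = px b22 x y -
      ((b11 x y - b12 x y * Real.cos (f x y)) / Real.sin (f x y)) * py f x y

lemma hd_snd (u : ℝ → ℝ → ℝ) (hu : Smooth2 u) (x y : ℝ) :
    HasDerivAt (fun s => u x s) (py u x y) y := by
  have h : DifferentiableAt ℝ (fun s => u x s) y :=
    ((hu.differentiable (by simp)).comp
      ((differentiable_const x).prodMk differentiable_id)).differentiableAt
  simpa [py] using h.hasDerivAt

lemma hd_fst (u : ℝ → ℝ → ℝ) (hu : Smooth2 u) (x y : ℝ) :
    HasDerivAt (fun s => u s y) (px u x y) x := by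
  have h : DifferentiableAt ℝ (fun s => u s y) x :=
    ((hu.differentiable (by simp)).comp
      (differentiable_id.prodMk (differentiable_const y))).differentiableAt
  simpa [px] using h.hasDerivAt

lemma smooth_px (u : ℝ → ℝ → ℝ) (hu : Smooth2 u) : Smooth2 (px u) := by
  have key : ∀ x y : ℝ, px u x y = fderiv ℝ (fun p : ℝ × ℝ => u p.1 p.2) (x, y) (1, 0) := by
    intro x y
    have hF : HasFDerivAt (fun p : ℝ × ℝ => u p.1 p.2)
        (fderiv ℝ (fun p : ℝ × ℝ => u p.1 p.2) (x, y)) (x, y) :=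
      ((hu.differentiable (by simp)) (x, y)).hasFDerivAt
    have hg : HasDerivAt (fun s : ℝ => (s, y)) ((1 : ℝ), (0 : ℝ)) x :=
      (hasDerivAt_id x).prodMk (hasDerivAt_const x y)
    exact (hF.comp_hasDerivAt x hg).deriv
  have heq : (fun p : ℝ × ℝ => px u p.1 p.2)
      = fun p : ℝ × ℝ => fderiv ℝ (fun q : ℝ × ℝ => u q.1 q.2) p (1, 0) := by
    funext p; exact key p.1 p.2
  rw [Smooth2, heq]
  exact (hu.fderiv_right (by simp)).clm_apply contDiff_const

set_option maxHeartbeats 2000000 in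
/-- the nonparametric zero-curvature representation of the GMC equations
in Tchebycheff coordinates. -/
theorem zcr_tchebycheff_nonparametric (f b11 b12 b22 : ℝ → ℝ → ℝ)
    (hf : Smooth2 f) (h11 : Smooth2 b11) (h12 : Smooth2 b12) (h22 : Smooth2 b22)
    (hs : ∀ x y, Real.sin (f x y) ≠ 0)
    (hgmc : GMCT f b11 b12 b22) :
    ∀ x y, curv
      (fun x y => (Complex.I / 2) •
        !![((px f x y : ℝ) : ℂ),
            (Complex.exp (Complex.I * (f x y : ℝ)) * (b11 x y : ℝ) - (b12 x y : ℝ)) /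
              ((Real.sin (f x y) : ℝ) : ℂ);
           (Complex.exp (-(Complex.I * (f x y : ℝ))) * (b11 x y : ℝ) - (b12 x y : ℝ)) /
              ((Real.sin (f x y) : ℝ) : ℂ),
            -((px f x y : ℝ) : ℂ)])
      (fun x y => (Complex.I / 2) •
        !![0,
            (Complex.exp (Complex.I * (f x y : ℝ)) * (b12 x y : ℝ) - (b22 x y : ℝ)) /
              ((Real.sin (f x y) : ℝ) : ℂ);
           (Complex.exp (-(Complex.I * (f x y : ℝ))) * (b12 x y : ℝ) - (b22 x y : ℝ)) /
              ((Real.sin (f x y) : ℝ) : ℂ),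
            0]) x y = 0 := by
  intro x y
  -- real scalar derivative facts in second variable (at y)
  have hfy := hd_snd f hf x y
  have hfxy := hd_snd (px f) (smooth_px f hf) x y
  have hb11y := hd_snd b11 h11 x y
  have hb12y := hd_snd b12 h12 x y
  -- in first variable (at x)
  have hfx := hd_fst f hf x y
  have hb12x := hd_fst b12 h12 x y
  have hb22x := hd_fst b22 h22 x y
  -- complexified
  have cfy := hfy.ofReal_comp
  have cfxy := hfxy.ofReal_comp
  have cb11y := hb11y.ofReal_comp
  have cb12y := hb12y.ofReal_comp
  have cfx := hfx.ofReal_comp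
  have cb12x := hb12x.ofReal_comp
  have cb22x := hb22x.ofReal_comp
  have csiny := (hfy.sin).ofReal_comp
  have csinx := (hfx.sin).ofReal_comp
  have cexpy := (cfy.const_mul Complex.I).cexp
  have cexpny := ((cfy.const_mul Complex.I).neg).cexp
  have cexpx := (cfx.const_mul Complex.I).cexp
  have cexpnx := ((cfx.const_mul Complex.I).neg).cexp
  have hS : ((Real.sin (f x y) : ℝ) : ℂ) ≠ 0 := Complex.ofReal_ne_zero.2 (hs x y)
  -- entry derivatives
  have dA01 := ((((cexpy.mul cb11y).sub cb12y).div csiny hS).const_mul (Complex.I/2)).deriv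
  have dA10 := ((((cexpny.mul cb11y).sub cb12y).div csiny hS).const_mul (Complex.I/2)).deriv
  have dA00 := ((cfxy.const_mul (Complex.I/2))).deriv
  have dA11 := ((cfxy.neg.const_mul (Complex.I/2))).deriv
  have dB01 := ((((cexpx.mul cb12x).sub cb22x).div csinx hS).const_mul (Complex.I/2)).deriv
  have dB10 := ((((cexpnx.mul cb12x).sub cb22x).div csinx hS).const_mul (Complex.I/2)).deriv
  simp only [Pi.mul_apply, Pi.sub_apply, Pi.div_apply, Pi.neg_apply] at dA01 dA10 dA11 dB01 dB10
  ext i j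
  fin_cases i <;> fin_cases j <;>
    simp only [curv, pdx, pdy, Matrix.add_apply, Matrix.sub_apply, Matrix.of_apply,
      Matrix.smul_apply, smul_eq_mul, Matrix.mul_apply, Fin.sum_univ_two,
      Matrix.cons_val', Matrix.cons_val_zero, Matrix.cons_val_one, Matrix.head_cons,
      Matrix.empty_val', Matrix.cons_val_fin_one, Matrix.head_fin_const,
      Matrix.zero_apply, Fin.isValue, Fin.mk_zero, Fin.mk_one]
  · rw [dA00]
    obtain ⟨g1, g2, g3⟩ := hgmc x y
    have g1C := congrArg (Complex.ofReal) g1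
    have g2C := congrArg (Complex.ofReal) g2
    have g3C := congrArg (Complex.ofReal) g3
    push_cast at g1C g2C g3C
    have hE : Complex.exp (Complex.I * ((f x y : ℝ) : ℂ))
        = ((Real.cos (f x y) : ℝ) : ℂ) + ((Real.sin (f x y) : ℝ) : ℂ) * Complex.I := by
      rw [mul_comm, Complex.exp_mul_I, ← Complex.ofReal_cos, ← Complex.ofReal_sin]
    have hE' : Complex.exp (-(Complex.I * ((f x y : ℝ) : ℂ)))
        = ((Real.cos (f x y) : ℝ) : ℂ) - ((Real.sin (f x y) : ℝ) : ℂ) * Complex.I := by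
      rw [show -(Complex.I * ((f x y : ℝ) : ℂ)) = ((-(f x y) : ℝ) : ℂ) * Complex.I by
        push_cast; ring, Complex.exp_mul_I]
      push_cast
      simp [Complex.cos_neg, Complex.sin_neg]
      ring
    have hpyth : Complex.cos ((f x y : ℝ) : ℂ)^2 + Complex.sin ((f x y : ℝ) : ℂ)^2 = 1 :=
      Complex.cos_sq_add_sin_sq _
    have hSc : Complex.sin ((f x y : ℝ) : ℂ) ≠ 0 := by
      rw [← Complex.ofReal_sin]; exact hS
    simp only [hE, hE']
    push_cast
    simp only [g1C, g2C, g3C]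
    field_simp
    rw [deriv_const]
    linear_combination (2 * Complex.I * Complex.sin ((f x y : ℝ) : ℂ) * ((b12 x y : ℂ)^2 - (b11 x y : ℂ) * (b22 x y : ℂ))) * Complex.I_sq

  · rw [dA01, dB01]
    obtain ⟨g1, g2, g3⟩ := hgmc x y
    have g1C := congrArg (Complex.ofReal) g1
    have g2C := congrArg (Complex.ofReal) g2
    have g3C := congrArg (Complex.ofReal) g3
    push_cast at g1C g2C g3C
    have hE : Complex.exp (Complex.I * ((f x y : ℝ) : ℂ))
        = ((Real.cos (f x y) : ℝ) : ℂ) + ((Real.sin (f x y) : ℝ) : ℂ) * Complex.I := by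
      rw [mul_comm, Complex.exp_mul_I, ← Complex.ofReal_cos, ← Complex.ofReal_sin]
    have hE' : Complex.exp (-(Complex.I * ((f x y : ℝ) : ℂ)))
        = ((Real.cos (f x y) : ℝ) : ℂ) - ((Real.sin (f x y) : ℝ) : ℂ) * Complex.I := by
      rw [show -(Complex.I * ((f x y : ℝ) : ℂ)) = ((-(f x y) : ℝ) : ℂ) * Complex.I by
        push_cast; ring, Complex.exp_mul_I]
      push_cast
      simp [Complex.cos_neg, Complex.sin_neg]
      ring
    have hpyth : Complex.cos ((f x y : ℝ) : ℂ)^2 + Complex.sin ((f x y : ℝ) : ℂ)^2 = 1 :=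
      Complex.cos_sq_add_sin_sq _
    have hSc : Complex.sin ((f x y : ℝ) : ℂ) ≠ 0 := by
      rw [← Complex.ofReal_sin]; exact hS
    simp only [hE, hE']
    push_cast
    simp only [g1C, g2C, g3C]
    field_simp
    linear_combination (- 2 * Complex.I * (py f x y : ℂ) * (b11 x y : ℂ)) * hpyth + (2 * Complex.I * (py f x y : ℂ) * (b11 x y : ℂ) * Complex.sin ((f x y : ℝ) : ℂ)^2) * Complex.I_sq

  · rw [dA10, dB10]
    obtain ⟨g1, g2, g3⟩ := hgmc x y
    have g1C := congrArg (Complex.ofReal) g1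
    have g2C := congrArg (Complex.ofReal) g2
    have g3C := congrArg (Complex.ofReal) g3
    push_cast at g1C g2C g3C
    have hE : Complex.exp (Complex.I * ((f x y : ℝ) : ℂ))
        = ((Real.cos (f x y) : ℝ) : ℂ) + ((Real.sin (f x y) : ℝ) : ℂ) * Complex.I := by
      rw [mul_comm, Complex.exp_mul_I, ← Complex.ofReal_cos, ← Complex.ofReal_sin]
    have hE' : Complex.exp (-(Complex.I * ((f x y : ℝ) : ℂ)))
        = ((Real.cos (f x y) : ℝ) : ℂ) - ((Real.sin (f x y) : ℝ) : ℂ) * Complex.I := by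
      rw [show -(Complex.I * ((f x y : ℝ) : ℂ)) = ((-(f x y) : ℝ) : ℂ) * Complex.I by
        push_cast; ring, Complex.exp_mul_I]
      push_cast
      simp [Complex.cos_neg, Complex.sin_neg]
      ring
    have hpyth : Complex.cos ((f x y : ℝ) : ℂ)^2 + Complex.sin ((f x y : ℝ) : ℂ)^2 = 1 :=
      Complex.cos_sq_add_sin_sq _
    have hSc : Complex.sin ((f x y : ℝ) : ℂ) ≠ 0 := by
      rw [← Complex.ofReal_sin]; exact hS
    simp only [hE, hE']
    push_cast
    simp only [g1C, g2C, g3C]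
    field_simp
    linear_combination (- 2 * Complex.I * (py f x y : ℂ) * (b11 x y : ℂ)) * hpyth + (2 * Complex.I * (py f x y : ℂ) * (b11 x y : ℂ) * Complex.sin ((f x y : ℝ) : ℂ)^2) * Complex.I_sq

  · rw [dA11]
    obtain ⟨g1, g2, g3⟩ := hgmc x y
    have g1C := congrArg (Complex.ofReal) g1
    have g2C := congrArg (Complex.ofReal) g2
    have g3C := congrArg (Complex.ofReal) g3
    push_cast at g1C g2C g3C
    have hE : Complex.exp (Complex.I * ((f x y : ℝ) : ℂ))
        = ((Real.cos (f x y) : ℝ) : ℂ) + ((Real.sin (f x y) : ℝ) : ℂ) * Complex.I := by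
      rw [mul_comm, Complex.exp_mul_I, ← Complex.ofReal_cos, ← Complex.ofReal_sin]
    have hE' : Complex.exp (-(Complex.I * ((f x y : ℝ) : ℂ)))
        = ((Real.cos (f x y) : ℝ) : ℂ) - ((Real.sin (f x y) : ℝ) : ℂ) * Complex.I := by
      rw [show -(Complex.I * ((f x y : ℝ) : ℂ)) = ((-(f x y) : ℝ) : ℂ) * Complex.I by
        push_cast; ring, Complex.exp_mul_I]
      push_cast
      simp [Complex.cos_neg, Complex.sin_neg]
      ring
    have hpyth : Complex.cos ((f x y : ℝ) : ℂ)^2 + Complex.sin ((f x y : ℝ) : ℂ)^2 = 1 :=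
      Complex.cos_sq_add_sin_sq _
    have hSc : Complex.sin ((f x y : ℝ) : ℂ) ≠ 0 := by
      rw [← Complex.ofReal_sin]; exact hS
    simp only [hE, hE']
    push_cast
    simp only [g1C, g2C, g3C]
    field_simp
    rw [deriv_const]
    linear_combination (-(2 * Complex.I * Complex.sin ((f x y : ℝ) : ℂ) * ((b12 x y : ℂ)^2 - (b11 x y : ℂ) * (b22 x y : ℂ)))) * Complex.I_sq
end
end

section
/- Let f > 0, b11, b12, b22 be smooth functions of (x,y) satisfying the Gauss-Mainardi-Codazzi equations in geodesic coordinates: f_{xx} = f_x^2/(2f) + 2(b12^2 - b11 b22), b11_y = b12_x + (f_x/(2f)) b12, b12_y = b22_x + (f_y/(2f)) b12 - (f_x/(2f))(b22 + f b11). Then A = -(1/2)[[0, i b12/\sqrt{f} + b11],[ i b12/\sqrt{f} - b11, 0]] and B = -(1/2)[[ i f_x/(2\sqrt{f}), i b22/\sqrt{f} + b12],[ i b22/\sqrt{f} - b12, -i f_x/(2\sqrt{f})]] satisfy the zero-curvature condition A_y - B_x + [A,B] = 0. -/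
open Matrix

noncomputable section

/-- The Gauss–Mainardi–Codazzi equations in geodesic coordinates (metric
`dx² + f dy²`). -/
def GMCG (f b11 b12 b22 : ℝ → ℝ → ℝ) : Prop :=
  ∀ x y : ℝ,
    px (px f) x y = (px f x y) ^ 2 / (2 * f x y)
      + 2 * (b12 x y ^ 2 - b11 x y * b22 x y) ∧
    py b11 x y = px b12 x y + (px f x y / (2 * f x y)) * b12 x y ∧
    py b12 x y = px b22 x y + (py f x y / (2 * f x y)) * b12 x y
      - (px f x y / (2 * f x y)) * (b22 x y + f x y * b11 x y)


lemma smooth_slice_x {u : ℝ → ℝ → ℝ} (hu : Smooth2 u) (y : ℝ) :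
    ContDiff ℝ (⊤ : ℕ∞) (fun s => u s y) :=
  hu.comp (contDiff_id.prodMk contDiff_const)

lemma smooth_slice_y {u : ℝ → ℝ → ℝ} (hu : Smooth2 u) (x : ℝ) :
    ContDiff ℝ (⊤ : ℕ∞) (fun t => u x t) :=
  hu.comp (contDiff_const.prodMk contDiff_id)

lemma hasDerivAt_px {u : ℝ → ℝ → ℝ} (hu : Smooth2 u) (x y : ℝ) :
    HasDerivAt (fun s => u s y) (px u x y) x :=
  (((smooth_slice_x hu y).differentiable (by simp)) x).hasDerivAt

lemma hasDerivAt_py {u : ℝ → ℝ → ℝ} (hu : Smooth2 u) (x y : ℝ) :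
    HasDerivAt (fun t => u x t) (py u x y) y :=
  (((smooth_slice_y hu x).differentiable (by simp)) y).hasDerivAt

lemma hasDerivAt_pxpx {u : ℝ → ℝ → ℝ} (hu : Smooth2 u) (x y : ℝ) :
    HasDerivAt (fun s => px u s y) (px (px u) x y) x := by
  have h := (contDiff_infty_iff_deriv.mp ((smooth_slice_x hu y).of_le (by simp))).2
  exact ((h.differentiable (by simp)) x).hasDerivAt

set_option maxHeartbeats 2000000 in
/-- the nonparametric zero-curvature representation of the GMC equations
in geodesic coordinates. -/
theorem zcr_geodesic_nonparametric (f b11 b12 b22 : ℝ → ℝ → ℝ)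
    (hf : Smooth2 f) (h11 : Smooth2 b11) (h12 : Smooth2 b12) (h22 : Smooth2 b22)
    (hfpos : ∀ x y, 0 < f x y)
    (hgmc : GMCG f b11 b12 b22) :
    ∀ x y, curv
      (fun x y => (-(1 : ℂ) / 2) •
        !![0, Complex.I * (b12 x y : ℝ) / ((Real.sqrt (f x y) : ℝ) : ℂ) + (b11 x y : ℝ);
           Complex.I * (b12 x y : ℝ) / ((Real.sqrt (f x y) : ℝ) : ℂ) - (b11 x y : ℝ), 0])
      (fun x y => (-(1 : ℂ) / 2) •
        !![Complex.I * (px f x y : ℝ) / (2 * ((Real.sqrt (f x y) : ℝ) : ℂ)),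
            Complex.I * (b22 x y : ℝ) / ((Real.sqrt (f x y) : ℝ) : ℂ) + (b12 x y : ℝ);
           Complex.I * (b22 x y : ℝ) / ((Real.sqrt (f x y) : ℝ) : ℂ) - (b12 x y : ℝ),
            -(Complex.I * (px f x y : ℝ) / (2 * ((Real.sqrt (f x y) : ℝ) : ℂ)))]) x y
      = 0 := by
  intro x y
  obtain ⟨hG, hC1, hC2⟩ := hgmc x y
  have hFpos := hfpos x y
  set s : ℝ := Real.sqrt (f x y) with hsdef
  have hs0 : s ≠ 0 := ne_of_gt (Real.sqrt_pos.mpr hFpos)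
  have hs2 : s ^ 2 = f x y := Real.sq_sqrt hFpos.le
  have hsC : (s : ℂ) ≠ 0 := by exact_mod_cast hs0
  have h2sC : (2 : ℂ) * (s : ℂ) ≠ 0 := by simp [hsC]
  have hfx := hasDerivAt_px hf x y
  have hfy := hasDerivAt_py hf x y
  have hb11y := hasDerivAt_py h11 x y
  have hb12x := hasDerivAt_px h12 x y
  have hb12y := hasDerivAt_py h12 x y
  have hb22x := hasDerivAt_px h22 x y
  have hfxx := hasDerivAt_pxpx hf x y
  have hsx : HasDerivAt (fun t => Real.sqrt (f t y)) (px f x y / (2 * s)) x :=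
    hfx.sqrt (ne_of_gt hFpos)
  have hsy : HasDerivAt (fun t => Real.sqrt (f x t)) (py f x y / (2 * s)) y :=
    hfy.sqrt (ne_of_gt hFpos)
  have dA01 := ((hb12y.ofReal_comp.const_mul Complex.I).div hsy.ofReal_comp hsC).add
    hb11y.ofReal_comp
  have dA10 := ((hb12y.ofReal_comp.const_mul Complex.I).div hsy.ofReal_comp hsC).sub
    hb11y.ofReal_comp
  have dB00 := (hfxx.ofReal_comp.const_mul Complex.I).div
    (hsx.ofReal_comp.const_mul (2:ℂ)) h2sC
  have dB01 := ((hb22x.ofReal_comp.const_mul Complex.I).div hsx.ofReal_comp hsC).add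
    hb12x.ofReal_comp
  have dB10 := ((hb22x.ofReal_comp.const_mul Complex.I).div hsx.ofReal_comp hsC).sub
    hb12x.ofReal_comp
  simp only [Pi.div_def, Pi.add_def, Pi.sub_def, Pi.neg_def] at dA01 dA10 dB00 dB01 dB10
  clear_value s
  have hGC : ((px (px f) x y : ℝ) : ℂ) = (px f x y : ℝ) ^ 2 / (2 * (s:ℂ)^2)
      + 2 * (((b12 x y : ℝ) : ℂ)^2 - (b11 x y : ℝ) * (b22 x y : ℝ)) := by
    rw [← hs2] at hG; exact_mod_cast hG
  have hC1C : ((py b11 x y : ℝ) : ℂ) = (px b12 x y : ℝ)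
      + (px f x y : ℝ) / (2 * (s:ℂ)^2) * (b12 x y : ℝ) := by
    rw [← hs2] at hC1; exact_mod_cast hC1
  have hC2C : ((py b12 x y : ℝ) : ℂ) = (px b22 x y : ℝ)
      + (py f x y : ℝ) / (2 * (s:ℂ)^2) * (b12 x y : ℝ)
      - (px f x y : ℝ) / (2 * (s:ℂ)^2) * ((b22 x y : ℝ) + (s:ℂ)^2 * (b11 x y : ℝ)) := by
    rw [← hs2] at hC2; exact_mod_cast hC2
  ext i j
  fin_cases i <;> fin_cases j <;>
    simp only [Fin.mk_zero, Fin.mk_one, curv, pdx, pdy, Matrix.of_apply, Matrix.sub_apply, Matrix.add_apply,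
      Matrix.mul_apply, Fin.sum_univ_two, Matrix.smul_apply, smul_eq_mul,
      Matrix.cons_val', Matrix.cons_val_zero, Matrix.cons_val_one, Matrix.head_cons,
      Matrix.head_fin_const, Matrix.empty_val', Matrix.cons_val_fin_one,
      Matrix.zero_apply, mul_zero, zero_mul, deriv_const']
  · rw [(dB00.const_mul (-(1:ℂ)/2)).deriv, ← hsdef]
    push_cast
    rw [hGC]
    rw [add_eq_zero_iff_eq_neg]
    field_simp [hsC]
    ring_nf
  · rw [(dA01.const_mul (-(1:ℂ)/2)).deriv, (dB01.const_mul (-(1:ℂ)/2)).deriv, ← hsdef]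
    push_cast
    rw [hC1C, hC2C]
    rw [add_eq_zero_iff_eq_neg]
    field_simp [hsC]
    ring_nf
    try simp only [Complex.I_sq, Complex.I_pow_four]
    field_simp [hsC]
    ring
  · rw [(dA10.const_mul (-(1:ℂ)/2)).deriv, (dB10.const_mul (-(1:ℂ)/2)).deriv, ← hsdef]
    push_cast
    rw [hC1C, hC2C]
    rw [add_eq_zero_iff_eq_neg]
    field_simp [hsC]
    ring_nf
    try simp only [Complex.I_sq, Complex.I_pow_four]
    field_simp [hsC]
    ring
  · rw [(dB00.fun_neg.const_mul (-(1:ℂ)/2)).deriv, ← hsdef]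
    push_cast
    rw [hGC]
    rw [add_eq_zero_iff_eq_neg]
    field_simp [hsC]
    ring_nf
end
end
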